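/- Let q be a prime power, and let α, R be real numbers with 0 < α < 1/2 and 0 < R < 1. Then there exist a constant c > 0, a strictly increasing sequence of lengths (n_i) with gcd(n_i, q) = 1, and nonzero ideals C_i ⊆ R(F_q, n_i) (cyclic codes) such that dim_{F_q}(C_i)/n_i → R as i → ∞ and d(C_i) ≥ c · n_i^α for all i. -/

import Mathlib

open Polynomial

/-- The ring R(F,n) = F[X]/(X^n - 1). -/
abbrev CycRing (F : Type*) [Field F] (n : ℕ) := AdjoinRoot (X ^ n - Polynomial.C (1 : F))

/-- The unique representative of degree < n of an element of F[X]/(X^n-1). -/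
noncomputable def cycRep {F : Type*} [Field F] {n : ℕ} (f : CycRing F n) : F[X] :=
  if h : n = 0 then 0
  else AdjoinRoot.modByMonicHom (monic_X_pow_sub_C (1 : F) h) f

/-- Hamming weight of an element of F[X]/(X^n-1): the number of nonzero coefficients of
its representative of degree < n. -/
noncomputable def cycWt {F : Type*} [Field F] {n : ℕ} (f : CycRing F n) : ℕ :=
  (cycRep f).support.card

/-- Minimum distance of a cyclic code (ideal of F[X]/(X^n-1)). -/
noncomputable def cycDist {F : Type*} [Field F] {n : ℕ} (I : Ideal (CycRing F n)) : ℕ :=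
  sInf {w | ∃ f ∈ I, f ≠ 0 ∧ cycWt f = w}

/-- Dimension of a cyclic code as an F-vector space. -/
noncomputable def cycDim (F : Type*) [Field F] {n : ℕ} (I : Ideal (CycRing F n)) : ℕ :=
  Module.finrank F (Submodule.restrictScalars F I)

/-- The invariant μ(F,n). -/
noncomputable def mu (F : Type*) [Field F] (n : ℕ) : ℕ :=
  sInf {w | ∃ f : CycRing F n, f ≠ 0 ∧
    cycDist (Ideal.span {f}) + cycDim F (Ideal.span {f}) = w}

open Filter Topology

/-!
Take lengths `n = q ^ m - 1`: then `F_{q^m}` contains a primitive `n`-th root of unity `β`, and the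
minimal polynomial over `F_q` of every power of `β` has degree at most `m`. The BCH generator
`g_t = lcm (minpoly β^0, …, minpoly β^(t-1))` divides `X^n - 1`, and by the Vandermonde argument
the cyclic code it generates has minimum distance at least `t`. Its degree grows from `0` to `n`
in steps of at most `m`, so some `t` gives a code of dimension within `m` of `⌊R n⌋`, and then
`m · d ≥ deg g_t ≥ (1 - R) n`. Since `m ≈ log_q n`, this beats `n ^ α` for every `α < 1`.
-/

section CyclicRing

variable {F : Type*} [Field F] {n : ℕ}

lemma cycRep_mk (hn : n ≠ 0) (p : F[X]) :
    cycRep (AdjoinRoot.mk (X ^ n - C 1) p) = p %ₘ (X ^ n - C 1) := by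
  rw [cycRep, dif_neg hn, AdjoinRoot.modByMonicHom_mk]

lemma mk_cycRep (hn : n ≠ 0) (f : CycRing F n) : AdjoinRoot.mk _ (cycRep f) = f := by
  rw [cycRep, dif_neg hn]
  exact AdjoinRoot.mk_leftInverse _ f

lemma cycRep_ne_zero (hn : n ≠ 0) {f : CycRing F n} (hf : f ≠ 0) : cycRep f ≠ 0 :=
  fun h => hf (by rw [← mk_cycRep hn f, h, map_zero])

lemma degree_cycRep_lt (hn : n ≠ 0) (f : CycRing F n) : (cycRep f).degree < n := by
  obtain ⟨p, rfl⟩ := AdjoinRoot.mk_surjective f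
  rw [cycRep_mk hn, ← degree_X_pow_sub_C (Nat.pos_of_ne_zero hn) (1 : F)]
  exact degree_modByMonic_lt p (monic_X_pow_sub_C (1 : F) hn)

lemma dvd_cycRep_of_mem_span (hn : n ≠ 0) {g : F[X]} (hg : g ∣ X ^ n - C 1) {f : CycRing F n}
    (hf : f ∈ Ideal.span {AdjoinRoot.mk (X ^ n - C 1) g}) : g ∣ cycRep f := by
  obtain ⟨c, rfl⟩ := Ideal.mem_span_singleton.mp hf
  obtain ⟨h, rfl⟩ := AdjoinRoot.mk_surjective c
  rw [← map_mul, cycRep_mk hn, modByMonic_eq_sub_mul_div _ (X ^ n - C 1)]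
  exact dvd_sub (dvd_mul_right g h) (hg.mul_right _)

lemma cycDim_span_mk_add_natDegree (hn : n ≠ 0) {g : F[X]} (hg0 : g ≠ 0)
    (hg : g ∣ X ^ n - C 1) :
    cycDim F (Ideal.span {AdjoinRoot.mk (X ^ n - C (1 : F)) g}) + g.natDegree = n := by
  set I := Ideal.span {AdjoinRoot.mk (X ^ n - C (1 : F)) g}
  have hP0 : X ^ n - C (1 : F) ≠ 0 := (monic_X_pow_sub_C (1 : F) hn).ne_zero
  have : Module.Finite F (CycRing F n) := (AdjoinRoot.powerBasis hP0).finite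
  have hquot : (CycRing F n ⧸ I) ≃ₐ[F] AdjoinRoot g := by
    have hI : Ideal.map (Ideal.Quotient.mkₐ F (Ideal.span {X ^ n - C (1 : F)}))
        (Ideal.span {g}) = I := by
      rw [Ideal.map_span, Set.image_singleton]; rfl
    exact hI ▸ DoubleQuot.quotQuotEquivQuotOfLEₐ F (Ideal.span_singleton_le_span_singleton.mpr hg)
  have hfinrank_quot : Module.finrank F (CycRing F n ⧸ I.restrictScalars F) = g.natDegree := by
    rw [(Submodule.Quotient.restrictScalarsEquiv F I).finrank_eq, hquot.toLinearEquiv.finrank_eq,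
      (AdjoinRoot.powerBasis hg0).finrank, AdjoinRoot.powerBasis_dim]
  have := Submodule.finrank_quotient_add_finrank (I.restrictScalars F)
  rw [hfinrank_quot, (AdjoinRoot.powerBasis hP0).finrank, AdjoinRoot.powerBasis_dim,
    natDegree_X_pow_sub_C] at this
  exact (add_comm _ _).trans this

end CyclicRing

theorem IsPrimitiveRoot.le_card_support_of_aeval_pow_eq_zero {F E : Type*} [Field F] [Field E]
    [Algebra F E] {β : E} {n : ℕ} (hβ : IsPrimitiveRoot β n) {p : F[X]} (hp0 : p ≠ 0)
    (hpn : p.natDegree < n) {t : ℕ} (hroots : ∀ j < t, aeval (β ^ j) p = 0) :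
    t ≤ p.support.card := by
  classical
  by_contra! hlt
  let e := p.support.equivFin.symm
  let x : Fin p.support.card → E := fun k => β ^ (e k : ℕ)
  have hx : Function.Injective x := fun a b hab => e.injective <| Subtype.ext <|
    hβ.pow_inj ((le_natDegree_of_mem_supp _ (e a).2).trans_lt hpn)
      ((le_natDegree_of_mem_supp _ (e b).2).trans_lt hpn) hab
  let v : Fin p.support.card → E := fun k => algebraMap F E (p.coeff (e k))
  have hv : Matrix.vecMul v (Matrix.vandermonde x) = 0 := by
    funext j
    have hj := hroots j (j.2.trans hlt)
    rw [aeval_def, eval₂_eq_sum, Polynomial.sum_def, ← Finset.sum_coe_sort,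
      ← e.sum_comp] at hj
    simpa [Matrix.vecMul, dotProduct, x, v, ← pow_mul, mul_comm] using hj
  have hv0 := Matrix.eq_zero_of_vecMul_eq_zero (Matrix.det_vandermonde_ne_zero_iff.mpr hx) hv
  obtain ⟨i, hi⟩ := support_nonempty.mpr hp0
  apply mem_support_iff.mp hi
  simpa [v] using congrFun hv0 (e.symm ⟨i, hi⟩)

open IntermediateField in
theorem natDegree_minpoly_le_of_pow_card_pow_eq_self {F E : Type*} [Field F] [Fintype F]
    [Field E] [Algebra F E] {x : E} (hx : IsIntegral F x) {m : ℕ} (hm : m ≠ 0)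
    (hxm : x ^ Fintype.card F ^ m = x) : (minpoly F x).natDegree ≤ m := by
  have : FiniteDimensional F F⟮x⟯ := IntermediateField.adjoin.finiteDimensional hx
  have : Finite F⟮x⟯ := Module.finite_of_finite F
  have hfrob : FiniteField.frobeniusAlgHom F F⟮x⟯ ^ m = 1 := by
    refine IntermediateField.adjoin_algHom_ext F fun y hy => ?_
    rw [Set.mem_singleton_iff] at hy
    subst hy
    ext
    simp [AlgHom.coe_pow, FiniteField.coe_frobeniusAlgHom, pow_iterate, hxm]
  rw [← IntermediateField.adjoin.finrank hx, ← FiniteField.orderOf_frobeniusAlgHom]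
  exact Nat.le_of_dvd (Nat.pos_of_ne_zero hm) (orderOf_dvd_of_pow_eq_one hfrob)

theorem Polynomial.natDegree_lcm_le {F : Type*} [Field F] [DecidableEq F] (p q : F[X]) :
    (lcm p q).natDegree ≤ p.natDegree + q.natDegree := by
  by_cases hpq : p * q = 0
  · rw [(lcm_eq_zero_iff p q).mpr (mul_eq_zero.mp hpq), natDegree_zero]
    exact Nat.zero_le _
  · rw [← natDegree_mul (left_ne_zero_of_mul hpq) (right_ne_zero_of_mul hpq)]
    exact natDegree_le_of_dvd (lcm_dvd_mul p q) hpq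

theorem Nat.exists_le_lt_add_of_succ_le_add {a : ℕ → ℕ} {T m : ℕ} (h0 : a 0 < T + m)
    (hsucc : ∀ t, a (t + 1) ≤ a t + m) (hT : ∃ t, T ≤ a t) : ∃ t, T ≤ a t ∧ a t < T + m := by
  classical
  refine ⟨Nat.find hT, Nat.find_spec hT, ?_⟩
  rcases h : Nat.find hT with _ | s
  · exact h0
  · have hprev := Nat.find_min hT (show s < Nat.find hT by omega)
    have := hsucc s
    omega

section BCH

variable (F : Type*) {E : Type*} [Field F] [DecidableEq F] [Field E] [Algebra F E]

/-- The generator polynomial of the narrow-sense BCH code of designed distance `t`. -/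
noncomputable def bchGenerator (β : E) (t : ℕ) : F[X] :=
  (Finset.range t).lcm fun j => minpoly F (β ^ j)

variable {F} {β : E} {n : ℕ}

lemma minpoly_dvd_bchGenerator {j t : ℕ} (hj : j < t) : minpoly F (β ^ j) ∣ bchGenerator F β t :=
  Finset.dvd_lcm (Finset.mem_range.mpr hj)

lemma bchGenerator_dvd_X_pow_sub_one (hβ : IsPrimitiveRoot β n) (t : ℕ) :
    bchGenerator F β t ∣ X ^ n - C 1 :=
  Finset.lcm_dvd fun j _ => minpoly.dvd F _ <| by
    rw [map_sub, map_pow, aeval_X, aeval_C, map_one, pow_right_comm, hβ.pow_eq_one, one_pow,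
      sub_self]

lemma natDegree_bchGenerator_succ_le (t : ℕ) :
    (bchGenerator F β (t + 1)).natDegree ≤
      (bchGenerator F β t).natDegree + (minpoly F (β ^ t)).natDegree := by
  rw [bchGenerator, Finset.range_add_one, Finset.lcm_insert, add_comm]
  exact natDegree_lcm_le _ _

lemma natDegree_bchGenerator_le {m : ℕ} (hdeg : ∀ j, (minpoly F (β ^ j)).natDegree ≤ m) (t : ℕ) :
    (bchGenerator F β t).natDegree ≤ t * m := by
  induction t with
  | zero => simp [bchGenerator]
  | succ t ih =>
    rw [add_mul, one_mul]
    exact (natDegree_bchGenerator_succ_le t).trans (Nat.add_le_add ih (hdeg t))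

lemma le_natDegree_bchGenerator (hβ : IsPrimitiveRoot β n) {t : ℕ} (htn : t ≤ n)
    (hg : bchGenerator F β t ≠ 0) : t ≤ (bchGenerator F β t).natDegree := by
  classical
  have hcard : ((Finset.range t).image (β ^ ·)).card = t := by
    rw [Finset.card_image_of_injOn, Finset.card_range]
    intro a ha b hb hab
    exact hβ.pow_inj ((Finset.mem_range.mp ha).trans_le htn)
      ((Finset.mem_range.mp hb).trans_le htn) hab
  rw [← (bchGenerator F β t).natDegree_map (algebraMap F E)]
  refine hcard.symm.trans_le <| card_le_degree_of_subset_roots fun z hz => ?_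
  obtain ⟨j, hj, rfl⟩ := Finset.mem_image.mp (Finset.mem_val.mp hz)
  obtain ⟨c, hc⟩ := minpoly_dvd_bchGenerator (F := F) (β := β) (Finset.mem_range.mp hj)
  rw [mem_roots ((Polynomial.map_ne_zero_iff (algebraMap F E).injective).mpr hg), IsRoot,
    eval_map_algebraMap, hc, map_mul, minpoly.aeval, zero_mul]

lemma le_cycDist_span_bchGenerator (hβ : IsPrimitiveRoot β n) (hn : n ≠ 0) {t : ℕ}
    (hg : AdjoinRoot.mk (X ^ n - C 1) (bchGenerator F β t) ≠ 0) :
    t ≤ cycDist (Ideal.span {AdjoinRoot.mk (X ^ n - C 1) (bchGenerator F β t)}) := by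
  refine le_csInf ⟨_, _, Ideal.mem_span_singleton_self _, hg, rfl⟩ ?_
  rintro w ⟨f, hf, hf0, rfl⟩
  have hrep0 := cycRep_ne_zero hn hf0
  refine hβ.le_card_support_of_aeval_pow_eq_zero hrep0
    ((natDegree_lt_iff_degree_lt hrep0).mpr (degree_cycRep_lt hn f)) fun j hj => ?_
  obtain ⟨c, hc⟩ := (minpoly_dvd_bchGenerator hj).trans
    (dvd_cycRep_of_mem_span hn (bchGenerator_dvd_X_pow_sub_one hβ t) hf)
  rw [hc, map_mul, minpoly.aeval, zero_mul]

end BCH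

theorem exists_cyclic_code_of_isPrimitiveRoot {F E : Type*} [Field F] [Field E] [Algebra F E]
    {β : E} {n m k : ℕ} (hβ : IsPrimitiveRoot β n) (hn : n ≠ 0)
    (hdeg : ∀ j, (minpoly F (β ^ j)).natDegree ≤ m) (hmk : m ≤ k) (hkn : k ≤ n) :
    ∃ I : Ideal (CycRing F n), I ≠ ⊥ ∧ cycDim F I ≤ k ∧ k < cycDim F I + m ∧
      n ≤ cycDim F I + m * cycDist I := by
  classical
  have hm : 0 < m := by
    have h := hdeg 0
    rwa [pow_zero, minpoly.one, ← C_1, natDegree_X_sub_C] at h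
  have hg0 : ∀ t, bchGenerator F β t ≠ 0 := fun t =>
    ne_zero_of_dvd_ne_zero (monic_X_pow_sub_C (1 : F) hn).ne_zero
      (bchGenerator_dvd_X_pow_sub_one hβ t)
  -- the degrees of the generators grow in steps of at most `m`, from `0` up to at least `n`
  obtain ⟨t, hlow, hhigh⟩ := Nat.exists_le_lt_add_of_succ_le_add
    (a := fun t => (bchGenerator F β t).natDegree) (T := n - k) (m := m)
    (by simp only [bchGenerator, Finset.range_zero, Finset.lcm_empty, natDegree_one]; omega)
    (fun t => (natDegree_bchGenerator_succ_le t).trans (Nat.add_le_add_left (hdeg t) _))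
    ⟨n, (Nat.sub_le n k).trans (le_natDegree_bchGenerator hβ le_rfl (hg0 n))⟩
  have hdim := cycDim_span_mk_add_natDegree hn (hg0 t) (bchGenerator_dvd_X_pow_sub_one hβ t)
  have hmk0 : AdjoinRoot.mk (X ^ n - C 1) (bchGenerator F β t) ≠ 0 := by
    rw [Ne, AdjoinRoot.mk_eq_zero]
    intro hdvd
    have := natDegree_le_of_dvd hdvd (hg0 t)
    rw [natDegree_X_pow_sub_C] at this
    omega
  refine ⟨_, Ideal.span_singleton_eq_bot.not.mpr hmk0, by omega, by omega, ?_⟩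
  have hdist := le_cycDist_span_bchGenerator hβ hn hmk0
  have hdegt := natDegree_bchGenerator_le hdeg t
  have := Nat.mul_le_mul_left m hdist
  rw [mul_comm] at hdegt
  omega

theorem exists_cyclic_code {F : Type*} [Field F] [Fintype F] {q m k : ℕ}
    (hq : Fintype.card F = q) (hm : m ≠ 0) (hmk : m ≤ k) (hkn : k ≤ q ^ m - 1) :
    ∃ I : Ideal (CycRing F (q ^ m - 1)), I ≠ ⊥ ∧ cycDim F I ≤ k ∧ k < cycDim F I + m ∧
      q ^ m - 1 ≤ cycDim F I + m * cycDist I := by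
  subst hq
  set E := AlgebraicClosure F
  have hqm : 1 < Fintype.card F ^ m := Nat.one_lt_pow hm Fintype.one_lt_card
  have hn : Fintype.card F ^ m - 1 ≠ 0 := by omega
  -- `q = 0` in `F`, so `q ^ m - 1` is `-1` in `E`
  have : NeZero ((Fintype.card F ^ m - 1 : ℕ) : E) := by
    refine ⟨?_⟩
    rw [Nat.cast_sub hqm.le, Nat.cast_pow, ← map_natCast (algebraMap F E),
      FiniteField.cast_card_eq_zero, map_zero, zero_pow hm, Nat.cast_one, zero_sub]
    exact neg_ne_zero.mpr one_ne_zero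
  obtain ⟨β, hβ⟩ := HasEnoughRootsOfUnity.exists_primitiveRoot E (Fintype.card F ^ m - 1)
  refine exists_cyclic_code_of_isPrimitiveRoot hβ hn (fun j => ?_) hmk hkn
  refine natDegree_minpoly_le_of_pow_card_pow_eq_self (Algebra.IsIntegral.isIntegral _) hm ?_
  rw [← pow_mul, mul_comm, pow_mul, ← Nat.sub_add_cancel hqm.le, pow_succ, hβ.pow_eq_one, one_mul]

theorem tendsto_mul_rpow_div_pow_sub_one {q : ℕ} (hq : 1 < q) {α : ℝ} (hα : α < 1) :
    Tendsto (fun m : ℕ => m * ((q ^ m - 1 : ℕ) : ℝ) ^ α / ((q ^ m - 1 : ℕ) : ℝ)) atTop (𝓝 0) := by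
  have hq0 : (0 : ℝ) < q := by positivity
  set r : ℝ := (q : ℝ) ^ (α - 1)
  have hr1 : r < 1 := Real.rpow_lt_one_of_one_lt_of_neg (by exact_mod_cast hq) (by linarith)
  have hlim : Tendsto (fun m : ℕ => (2 : ℝ) ^ (1 - α) * (m * r ^ m)) atTop (𝓝 0) := by
    simpa using (tendsto_self_mul_const_pow_of_lt_one (by positivity) hr1).const_mul
      ((2 : ℝ) ^ (1 - α))
  refine squeeze_zero' (Eventually.of_forall fun m => by positivity) ?_ hlim
  filter_upwards [eventually_ne_atTop 0] with m hm
  have hqm : 2 ≤ q ^ m := hq.trans_le (Nat.le_self_pow hm q)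
  have hNeq : ((q ^ m - 1 : ℕ) : ℝ) = (q : ℝ) ^ m - 1 := by
    rw [Nat.cast_sub (by omega), Nat.cast_pow, Nat.cast_one]
  set N : ℝ := ((q ^ m - 1 : ℕ) : ℝ)
  have hN : (q : ℝ) ^ m / 2 ≤ N := by
    have : (2 : ℝ) ≤ (q : ℝ) ^ m := by exact_mod_cast hqm
    linarith
  have hN0 : 0 < N := lt_of_lt_of_le (by positivity) hN
  calc m * N ^ α / N = m * N ^ (α - 1) := by rw [Real.rpow_sub_one hN0.ne', mul_div_assoc]
    _ ≤ m * ((q : ℝ) ^ m / 2) ^ (α - 1) := by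
      refine mul_le_mul_of_nonneg_left ?_ (Nat.cast_nonneg m)
      exact Real.rpow_le_rpow_of_nonpos (by positivity) hN (by linarith)
    _ = 2 ^ (1 - α) * (m * r ^ m) := by
      rw [Real.div_rpow (by positivity) (by norm_num), ← Real.rpow_pow_comm hq0.le,
        show 1 - α = -(α - 1) by ring, Real.rpow_neg (by norm_num)]
      ring

theorem tendsto_div_pow_sub_one {q : ℕ} (hq : 1 < q) :
    Tendsto (fun m : ℕ => (m : ℝ) / ((q ^ m - 1 : ℕ) : ℝ)) atTop (𝓝 0) := by
  simpa using tendsto_mul_rpow_div_pow_sub_one hq (α := 0) one_pos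

theorem tendsto_div_of_le_of_lt_add {a k m n : ℕ → ℕ} {R : ℝ}
    (hk : Tendsto (fun i => (k i : ℝ) / n i) atTop (𝓝 R))
    (hm : Tendsto (fun i => (m i : ℝ) / n i) atTop (𝓝 0))
    (hak : ∀ i, a i ≤ k i) (hka : ∀ i, k i < a i + m i) :
    Tendsto (fun i => (a i : ℝ) / n i) atTop (𝓝 R) := by
  refine tendsto_of_tendsto_of_tendsto_of_le_of_le (by simpa using hk.sub hm) hk (fun i => ?_)
    (fun i => div_le_div_of_nonneg_right (Nat.cast_le.mpr (hak i)) (Nat.cast_nonneg _))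
  rw [← sub_div]
  refine div_le_div_of_nonneg_right ?_ (Nat.cast_nonneg _)
  have : (k i : ℝ) < a i + m i := by exact_mod_cast hka i
  linarith

theorem eventually_le_floor_and_mul_rpow_le {q : ℕ} (hq : 1 < q) {α R : ℝ} (hα : α < 1)
    (hR0 : 0 < R) (hR1 : R < 1) :
    ∀ᶠ m : ℕ in atTop, m ≠ 0 ∧ m ≤ ⌊R * ((q ^ m - 1 : ℕ) : ℝ)⌋₊ ∧
      m * ((q ^ m - 1 : ℕ) : ℝ) ^ α ≤ (1 - R) * ((q ^ m - 1 : ℕ) : ℝ) := by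
  have hlen : ∀ᶠ m : ℕ in atTop, (0 : ℝ) < ((q ^ m - 1 : ℕ) : ℝ) :=
    eventually_atTop.mpr ⟨1, fun m hm => by
      have := Nat.one_lt_pow (Nat.one_le_iff_ne_zero.mp hm) hq
      exact_mod_cast Nat.sub_pos_of_lt this⟩
  have hlin := (tendsto_div_pow_sub_one hq).eventually (gt_mem_nhds hR0)
  have hpow := (tendsto_mul_rpow_div_pow_sub_one hq hα).eventually (gt_mem_nhds (sub_pos.mpr hR1))
  filter_upwards [eventually_ne_atTop 0, hlen, hlin, hpow] with m hm hN hlin hpow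
  refine ⟨hm, Nat.le_floor ?_, ?_⟩
  · rw [div_lt_iff₀ hN] at hlin
    exact hlin.le
  · rw [div_lt_iff₀ hN] at hpow
    exact hpow.le

theorem exists_cyclic_code_of_le_floor {F : Type*} [Field F] [Fintype F] {q m : ℕ} {α R : ℝ}
    (hq : Fintype.card F = q) (hm : m ≠ 0) (hR1 : R < 1)
    (hmk : m ≤ ⌊R * ((q ^ m - 1 : ℕ) : ℝ)⌋₊)
    (hpow : m * ((q ^ m - 1 : ℕ) : ℝ) ^ α ≤ (1 - R) * ((q ^ m - 1 : ℕ) : ℝ)) :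
    ∃ I : Ideal (CycRing F (q ^ m - 1)), I ≠ ⊥ ∧ cycDim F I ≤ ⌊R * ((q ^ m - 1 : ℕ) : ℝ)⌋₊ ∧
      ⌊R * ((q ^ m - 1 : ℕ) : ℝ)⌋₊ < cycDim F I + m ∧
      ((q ^ m - 1 : ℕ) : ℝ) ^ α ≤ cycDist I := by
  set N : ℝ := ((q ^ m - 1 : ℕ) : ℝ)
  have hRN : 0 ≤ R * N := zero_le_one.trans (Nat.floor_pos.mp (by omega))
  have hkn : ⌊R * N⌋₊ ≤ q ^ m - 1 :=
    Nat.floor_le_of_le (mul_le_of_le_one_left (Nat.cast_nonneg _) hR1.le)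
  obtain ⟨I, hI0, hIk, hkI, hdist⟩ := exists_cyclic_code hq hm hmk hkn
  refine ⟨I, hI0, hIk, hkI, le_of_mul_le_mul_left ?_ (Nat.cast_pos.mpr (Nat.pos_of_ne_zero hm))⟩
  have hdist' : N ≤ cycDim F I + m * cycDist I := by
    simpa only [Nat.cast_add, Nat.cast_mul] using Nat.cast_le (α := ℝ) |>.mpr hdist
  have hIk' : (cycDim F I : ℝ) ≤ R * N := (Nat.cast_le.mpr hIk).trans (Nat.floor_le hRN)
  linarith

theorem good_cyclic_sequences_general (q : ℕ) (F : Type*) [Field F] [Fintype F]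
    (hq : Fintype.card F = q) (α R : ℝ)
    (hα : α < 1 / 2) (hR0 : 0 < R) (hR1 : R < 1) :
    ∃ c : ℝ, 0 < c ∧ ∃ (n : ℕ → ℕ) (I : ∀ i : ℕ, Ideal (CycRing F (n i))),
      StrictMono n ∧ (∀ i, Nat.Coprime (n i) q) ∧ (∀ i, I i ≠ ⊥) ∧
      Filter.Tendsto (fun i => (cycDim F (I i) : ℝ) / (n i : ℝ)) Filter.atTop (nhds R) ∧
      ∀ i, c * (n i : ℝ) ^ α ≤ (cycDist (I i) : ℝ) := by
  have hq1 : 1 < q := hq ▸ Fintype.one_lt_card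
  obtain ⟨M, hM⟩ := eventually_atTop.mp
    (eventually_le_floor_and_mul_rpow_le hq1 (hα.trans (by norm_num)) hR0 hR1)
  have hM' (i : ℕ) := hM (i + M) le_add_self
  choose I hI0 hIk hkI hdist using fun i =>
    exists_cyclic_code_of_le_floor hq (hM' i).1 hR1 (hM' i).2.1 (hM' i).2.2
  have hlen : Tendsto (fun m => ((q ^ m - 1 : ℕ) : ℝ)) atTop atTop :=
    tendsto_natCast_atTop_atTop.comp
      ((tendsto_sub_atTop_nat 1).comp (tendsto_pow_atTop_atTop_of_one_lt hq1))
  refine ⟨1, one_pos, fun i => q ^ (i + M) - 1, I, fun i j hij => ?_, fun i => ?_, hI0, ?_,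
    fun i => by simpa using hdist i⟩
  · exact Nat.sub_lt_sub_right (Nat.one_le_pow _ _ (by omega))
      (Nat.pow_lt_pow_right hq1 (by omega))
  · have := Nat.one_le_pow (i + M) q (by omega)
    exact ((Nat.coprime_self_sub_left this).mpr (Nat.coprime_one_left _)).coprime_dvd_right
      (dvd_pow_self q (hM' i).1)
  · refine tendsto_div_of_le_of_lt_add (k := fun i => ⌊R * ((q ^ (i + M) - 1 : ℕ) : ℝ)⌋₊)
      (m := fun i => i + M) ?_ ?_ hIk hkI
    · exact ((tendsto_nat_floor_mul_div_atTop hR0.le).comp hlen).comp (tendsto_add_atTop_nat M)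
    · exact (tendsto_div_pow_sub_one hq1).comp (tendsto_add_atTop_nat M)

/-- For every 0 < α < 1/2 and every rate 0 < R < 1, there exist sequences of cyclic codes
over F_q of strictly increasing lengths n_i coprime to q, of rate tending to R, and
minimum distance at least c·n_i^α. -/
theorem good_cyclic_sequences (q : ℕ) (F : Type*) [Field F] [Fintype F]
    (hq : Fintype.card F = q) (α R : ℝ)
    (hα0 : 0 < α) (hα : α < 1 / 2) (hR0 : 0 < R) (hR1 : R < 1) :
    ∃ c : ℝ, 0 < c ∧ ∃ (n : ℕ → ℕ) (I : ∀ i : ℕ, Ideal (CycRing F (n i))),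
      StrictMono n ∧ (∀ i, Nat.Coprime (n i) q) ∧ (∀ i, I i ≠ ⊥) ∧
      Filter.Tendsto (fun i => (cycDim F (I i) : ℝ) / (n i : ℝ)) Filter.atTop (nhds R) ∧
      ∀ i, c * (n i : ℝ) ^ α ≤ (cycDist (I i) : ℝ) :=
  good_cyclic_sequences_general q F hq α R hα hR0 hR1
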